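/- arXiv:2104.07612 — 4 statements merged into one kernel-verified Lean document; each statement's English description precedes it below -/
import Mathlib

section
/- If a 2p×2p complex matrix M satisfies M J M* ≥ J, where J = [[0,I_p],[I_p,0]] = J* = J^{-1}, then also M* J M ≥ J. -/
/-!
Write `[x] = Re ⟪J x, x⟫`; the hypothesis says `[x] ≤ [M† x]` for all `x`, the claim `[x] ≤ [M x]`.
Evaluating the Hermitian form of `[[J, M], [M†, J]]` through its two Schur complements gives
`[c] - [M† c] + [d] = [a] + [b] - [M b]` whenever `a = c + J M b` and `d = J M† c + b`.
If `[M y] < [y]`, the right-hand side is positive for every nonzero `(a, t)` in `E₊ × 𝕜`, with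
`b = t • y` and `E₊` the `+1`-eigenspace of `J`. Since `(a, t) ↦ d + J d` maps this space into the
smaller space `E₊`, some nonzero `(a, t)` makes `d` a `-1`-eigenvector of `J`, and then the
left-hand side is `≤ 0`.
-/

open Matrix
open scoped ComplexOrder

/-- The matrix `J = [[0, I],[I, 0]]`. -/
def Jm (p : ℕ) : Matrix (Fin p ⊕ Fin p) (Fin p ⊕ Fin p) ℂ :=
  Matrix.fromBlocks 0 1 1 0

open RCLike LinearMap
open scoped InnerProductSpace

section IndefiniteForm

variable {𝕜 E : Type*} [RCLike 𝕜] [NormedAddCommGroup E] [InnerProductSpace 𝕜 E]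
  {J : E →ₗ[𝕜] E}

def jQuad (J : E →ₗ[𝕜] E) (x : E) : ℝ := re ⟪J x, x⟫_𝕜

lemma jQuad_add (hJ : J.IsSymmetric) (x y : E) :
    jQuad J (x + y) = jQuad J x + jQuad J y + 2 * re ⟪J x, y⟫_𝕜 := by
  have : re ⟪J y, x⟫_𝕜 = re ⟪J x, y⟫_𝕜 := by rw [hJ, inner_re_symm]
  simp only [jQuad, map_add, inner_add_left, inner_add_right]
  linarith

lemma jQuad_smul (J : E →ₗ[𝕜] E) (t : 𝕜) (x : E) : jQuad J (t • x) = ‖t‖ ^ 2 * jQuad J x := by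
  rw [jQuad, jQuad, map_smul, inner_smul_left, inner_smul_right, ← mul_assoc, RCLike.conj_mul,
    ← ofReal_pow, re_ofReal_mul]

lemma jQuad_of_apply_eq_self {x : E} (hx : J x = x) : jQuad J x = ‖x‖ ^ 2 := by
  rw [jQuad, hx, inner_self_eq_norm_sq]

lemma jQuad_of_apply_eq_neg {x : E} (hx : J x = -x) : jQuad J x = -‖x‖ ^ 2 := by
  rw [jQuad, hx, inner_neg_left, map_neg, inner_self_eq_norm_sq]

lemma jQuad_apply_of_involutive (hJJ : ∀ x, J (J x) = x) (x : E) :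
    jQuad J (J x) = jQuad J x := by
  rw [jQuad, jQuad, hJJ, inner_re_symm]

variable [FiniteDimensional 𝕜 E]

lemma jQuad_schur_congr (hJ : J.IsSymmetric) (hJJ : ∀ x, J (J x) = x) (T : E →ₗ[𝕜] E)
    (c b : E) :
    jQuad J c - jQuad J (T c) + jQuad J (J (T c) + b) =
      jQuad J (c + J (T.adjoint b)) + jQuad J b - jQuad J (T.adjoint b) := by
  have cross : ⟪J (J (T c)), b⟫_𝕜 = ⟪J c, J (T.adjoint b)⟫_𝕜 := by
    rw [hJJ, hJ, hJJ, adjoint_inner_right]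
  rw [jQuad_add hJ, jQuad_add hJ, jQuad_apply_of_involutive hJJ,
    jQuad_apply_of_involutive hJJ, cross]
  ring

theorem jQuad_le_jQuad_adjoint (hJ : J.IsSymmetric) (hJJ : J * J = 1) {T : E →ₗ[𝕜] E}
    (hT : ∀ x, jQuad J x ≤ jQuad J (T x)) (y : E) : jQuad J y ≤ jQuad J (T.adjoint y) := by
  have hJJ' : ∀ x, J (J x) = x := fun x => by
    rw [← Module.End.mul_apply, hJJ, Module.End.one_apply]
  by_contra! hy
  let Eplus := Module.End.eigenspace J 1
  have hEplus : ∀ w, w + J w ∈ Eplus := fun w => by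
    rw [Module.End.mem_eigenspace_iff, map_add, hJJ', one_smul, add_comm]
  let b : Eplus × 𝕜 →ₗ[𝕜] E := toSpanSingleton 𝕜 E y ∘ₗ snd 𝕜 Eplus 𝕜
  let c : Eplus × 𝕜 →ₗ[𝕜] E := Eplus.subtype ∘ₗ fst 𝕜 Eplus 𝕜 - J ∘ₗ T.adjoint ∘ₗ b
  let d : Eplus × 𝕜 →ₗ[𝕜] E := J ∘ₗ T ∘ₗ c + b
  obtain ⟨v, hv, hv0⟩ := Submodule.exists_mem_ne_zero_of_ne_bot
    (ker_ne_bot_of_finrank_lt (f := codRestrict Eplus (d + J ∘ₗ d) fun v => hEplus (d v))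
      (by simp))
  have hJd : J (d v) = -d v :=
    eq_neg_of_add_eq_zero_right (congrArg Subtype.val (mem_ker.mp hv))
  have key := jQuad_schur_congr hJ hJJ' T (c v) (b v)
  rw [show J (T (c v)) + b v = d v from rfl, show c v + J (T.adjoint (b v)) = v.1 by simp [c],
    show b v = v.2 • y from rfl, map_smul, jQuad_smul, jQuad_smul, jQuad_of_apply_eq_neg hJd,
    jQuad_of_apply_eq_self (x := (v.1 : E))
      (by simpa using Module.End.mem_eigenspace_iff.mp v.1.2)] at key
  have hpos : 0 < ‖(v.1 : E)‖ ^ 2 + ‖v.2‖ ^ 2 * (jQuad J y - jQuad J (T.adjoint y)) := by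
    rcases eq_or_ne v.2 0 with ht | ht
    · have : (v.1 : E) ≠ 0 := fun h => hv0 (Prod.ext (Subtype.ext h) ht)
      simp only [ht, norm_zero]
      positivity
    · exact add_pos_of_nonneg_of_pos (by positivity) (mul_pos (by positivity) (sub_pos.mpr hy))
  nlinarith [hT (c v), sq_nonneg ‖d v‖]

lemma isPositive_adjoint_mul_mul_sub_iff (hJ : J.IsSymmetric) (A : E →ₗ[𝕜] E) :
    (A.adjoint * J * A - J).IsPositive ↔ ∀ x, jQuad J x ≤ jQuad J (A x) := by
  have hquad : ∀ x, re ⟪(A.adjoint * J * A - J) x, x⟫_𝕜 = jQuad J (A x) - jQuad J x := fun x => by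
    rw [LinearMap.sub_apply, inner_sub_left, map_sub, Module.End.mul_apply, Module.End.mul_apply,
      adjoint_inner_left, jQuad, jQuad]
  simp only [IsPositive, hquad, sub_nonneg]
  exact and_iff_right ((hJ.adjoint_conj A).sub hJ)

theorem isPositive_adjoint_mul_mul_sub (hJ : J.IsSymmetric) (hJJ : J * J = 1) {M : E →ₗ[𝕜] E}
    (h : (M * J * M.adjoint - J).IsPositive) : (M.adjoint * J * M - J).IsPositive := by
  have hM := (isPositive_adjoint_mul_mul_sub_iff hJ M.adjoint).mp (by rwa [adjoint_adjoint])
  rw [isPositive_adjoint_mul_mul_sub_iff hJ]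
  simpa only [adjoint_adjoint] using jQuad_le_jQuad_adjoint hJ hJJ hM

end IndefiniteForm

lemma Matrix.toEuclideanLin_mul {𝕜 n : Type*} [RCLike 𝕜] [Fintype n] [DecidableEq n]
    (A B : Matrix n n 𝕜) :
    toEuclideanLin (A * B) = toEuclideanLin A * toEuclideanLin B := by
  simp [Module.End.mul_eq_comp]

/-- if `M J M* ≥ J` then `M* J M ≥ J`. -/
theorem MJMstar_ge_J_iff (p : ℕ)
    (M : Matrix (Fin p ⊕ Fin p) (Fin p ⊕ Fin p) ℂ)
    (h : (M * Jm p * Mᴴ - Jm p).PosSemidef) :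
    (Mᴴ * Jm p * M - Jm p).PosSemidef := by
  have hJ : (Jm p).IsHermitian := by simp [Jm, IsHermitian, fromBlocks_conjTranspose]
  have hJJ : Jm p * Jm p = 1 := by simp [Jm, fromBlocks_multiply, ← fromBlocks_one]
  rw [← isPositive_toEuclideanLin_iff] at h ⊢
  simp only [map_sub, toEuclideanLin_mul, toEuclideanLin_conjTranspose_eq_adjoint] at h ⊢
  refine isPositive_adjoint_mul_mul_sub (isSymmetric_toEuclideanLin_iff.mpr hJ) ?_ h
  rw [← toEuclideanLin_mul, hJJ, toLpLin_one, Module.End.one_eq_id]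
end

section
/- Let 𝒫₁(λ), 𝒫₂(λ) be p×p matrices with 𝒫₁*𝒫₁ + 𝒫₂*𝒫₂ > 0 and [𝒫₁* 𝒫₂*] J [𝒫₁; 𝒫₂] ≥ 0, and let M be a 2p×2p matrix with M* J M ≥ J. Then the pair (P̃₁; P̃₂) := M (𝒫₁; 𝒫₂) also satisfies P̃₁*P̃₁ + P̃₂*P̃₂ > 0 and [P̃₁* P̃₂*] J [P̃₁; P̃₂] ≥ 0. -/
open Matrix
open scoped ComplexOrder

/-!
Write `P = (𝒫₁; 𝒫₂)`, so that the new pair is `M P`. Nonnegativity is inherited through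
`(M P)ᴴ J (M P) = Pᴴ J P + Pᴴ (Mᴴ J M - J) P`. For definiteness, `M P` must be injective:
if `M P x = 0`, then `v = P x` has `vᴴ J v ≥ 0` and `vᴴ (Mᴴ J M - J) v = -vᴴ J v ≥ 0`,
so `v` is isotropic for the semidefinite form `Mᴴ J M - J`, hence in its kernel; then
`J v = 0`, so `v = 0`, and `x = 0` because `Pᴴ P > 0`.
-/

namespace Matrix

section

variable {m n R : Type*} [Fintype n] [Ring R] [StarRing R]

lemma conjTranspose_mul_mul_mul_mul_same_eq_add (J M : Matrix n n R) (P : Matrix n m R) :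
    (M * P)ᴴ * J * (M * P) = Pᴴ * J * P + Pᴴ * (Mᴴ * J * M - J) * P := by
  simp only [conjTranspose_mul, Matrix.mul_sub, Matrix.sub_mul, Matrix.mul_assoc]
  abel

lemma PosSemidef.conjTranspose_mul_mul_mul_mul_same [Fintype m] [PartialOrder R]
    [AddLeftMono R] {J M : Matrix n n R} {P : Matrix n m R} (hP : (Pᴴ * J * P).PosSemidef)
    (hM : (Mᴴ * J * M - J).PosSemidef) :
    ((M * P)ᴴ * J * (M * P)).PosSemidef := by
  rw [conjTranspose_mul_mul_mul_mul_same_eq_add]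
  exact hP.add (hM.conjTranspose_mul_mul_same P)

end

section

variable {m n 𝕜 : Type*} [Fintype m] [Fintype n] [RCLike 𝕜]

lemma mulVec_injective_of_posDef_conjTranspose_mul_self {A : Matrix m n 𝕜}
    (hA : (Aᴴ * A).PosDef) : Function.Injective A.mulVec := by
  classical
  refine Function.Injective.of_comp (f := Aᴴ.mulVec) ?_
  simpa only [Function.comp_def, mulVec_mulVec] using mulVec_injective_of_isUnit hA.isUnit

lemma eq_zero_of_mulVec_eq_zero_of_posSemidef_sub {J M : Matrix n n 𝕜}
    (hJ : Function.Injective J.mulVec) (hM : (Mᴴ * J * M - J).PosSemidef) {v : n → 𝕜}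
    (hv : 0 ≤ star v ⬝ᵥ J *ᵥ v) (hMv : M *ᵥ v = 0) : v = 0 := by
  have hform : star v ⬝ᵥ (Mᴴ * J * M - J) *ᵥ v = -(star v ⬝ᵥ J *ᵥ v) := by
    simp [sub_mulVec, ← mulVec_mulVec, hMv]
  have hJv : star v ⬝ᵥ J *ᵥ v = 0 :=
    le_antisymm (neg_nonneg.mp (hform ▸ hM.dotProduct_mulVec_nonneg v)) hv
  have hker : (Mᴴ * J * M - J) *ᵥ v = 0 :=
    (hM.dotProduct_mulVec_zero_iff v).mp (by rw [hform, hJv, neg_zero])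
  simp only [sub_mulVec, ← mulVec_mulVec, hMv, mulVec_zero, zero_sub, neg_eq_zero] at hker
  exact hJ (hker.trans (mulVec_zero J).symm)

lemma mulVec_injective_mul_of_posSemidef_sub {J M : Matrix n n 𝕜} {P : Matrix n m 𝕜}
    (hJ : Function.Injective J.mulVec) (hM : (Mᴴ * J * M - J).PosSemidef)
    (hP : (Pᴴ * J * P).PosSemidef) (hPinj : Function.Injective P.mulVec) :
    Function.Injective (M * P).mulVec := by
  refine (injective_iff_map_eq_zero (M * P).mulVecLin).mpr fun x hx => ?_
  have hPx : P *ᵥ x = 0 := by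
    refine eq_zero_of_mulVec_eq_zero_of_posSemidef_sub hJ hM ?_ (by rwa [mulVec_mulVec])
    simpa only [star_mulVec, dotProduct_mulVec, vecMul_vecMul] using
      hP.dotProduct_mulVec_nonneg x
  exact hPinj (hPx.trans (mulVec_zero P).symm)

end

lemma conjTranspose_fromRows_mul_fromRows {m₁ m₂ n R : Type*} [Fintype m₁] [Fintype m₂]
    [Semiring R] [StarRing R] (A : Matrix m₁ n R) (B : Matrix m₂ n R) :
    (fromRows A B)ᴴ * fromRows A B = Aᴴ * A + Bᴴ * B := by
  rw [conjTranspose_fromRows_eq_fromCols_conjTranspose, fromCols_mul_fromRows]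

end Matrix

lemma Jm_mul_Jm (p : ℕ) : Jm p * Jm p = 1 := by
  simp [Jm, fromBlocks_multiply, ← fromBlocks_one]

lemma mulVec_injective_Jm (p : ℕ) : Function.Injective (Jm p).mulVec :=
  Function.LeftInverse.injective (g := (Jm p).mulVec) fun v => by
    rw [mulVec_mulVec, Jm_mul_Jm, one_mulVec]

/-- if the pair `(𝒫₁, 𝒫₂)` is nonsingular with property-`J`
(`𝒫₁*𝒫₁ + 𝒫₂*𝒫₂ > 0` and `[𝒫₁* 𝒫₂*] J [𝒫₁; 𝒫₂] ≥ 0`) and `M* J M ≥ J`, then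
the pair `(P̃₁; P̃₂) = M (𝒫₁; 𝒫₂)` (with blocks `P̃₁, P̃₂`) has the same
properties: `P̃₁*P̃₁ + P̃₂*P̃₂ > 0` and `[P̃₁* P̃₂*] J [P̃₁; P̃₂] ≥ 0`. -/
theorem pair_transformed_keeps_propertyJ (p : ℕ)
    (P₁ P₂ : Matrix (Fin p) (Fin p) ℂ)
    (M : Matrix (Fin p ⊕ Fin p) (Fin p ⊕ Fin p) ℂ)
    (hpos : (P₁ᴴ * P₁ + P₂ᴴ * P₂).PosDef)
    (hJ : ((Matrix.fromRows P₁ P₂)ᴴ * Jm p * Matrix.fromRows P₁ P₂).PosSemidef)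
    (hM : (Mᴴ * Jm p * M - Jm p).PosSemidef)
    (Pt₁ Pt₂ : Matrix (Fin p) (Fin p) ℂ)
    (hPt₁ : Pt₁ = (M * Matrix.fromRows P₁ P₂).submatrix Sum.inl id)
    (hPt₂ : Pt₂ = (M * Matrix.fromRows P₁ P₂).submatrix Sum.inr id) :
    (Pt₁ᴴ * Pt₁ + Pt₂ᴴ * Pt₂).PosDef ∧
    ((Matrix.fromRows Pt₁ Pt₂)ᴴ * Jm p * Matrix.fromRows Pt₁ Pt₂).PosSemidef := by
  have hPt : fromRows Pt₁ Pt₂ = M * fromRows P₁ P₂ := by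
    rw [hPt₁, hPt₂]
    exact fromRows_toRows _
  rw [← conjTranspose_fromRows_mul_fromRows] at hpos ⊢
  rw [hPt]
  refine ⟨.conjTranspose_mul_self _ ?_, hJ.conjTranspose_mul_mul_mul_mul_same hM⟩
  exact mulVec_injective_mul_of_posSemidef_sub (mulVec_injective_Jm p) hM hJ
    (mulVec_injective_of_posDef_conjTranspose_mul_self hpos)
end

section
/- Let {A, S, Π} be a symmetric S-node: A, S bounded operators on a Hilbert space H, S = S* > 0 boundedly invertible, Π : ℂ^{2p} → H bounded, satisfying A S - S A* = i Π J Π* with J = [[0,I_p],[I_p,0]]. Define w_A(λ) = I_{2p} - i J Π* S^{-1} (A - λ I)^{-1} Π for λ in the resolvent set of A. Then for λ, μ in the resolvent set of A, w_A(μ)* J w_A(λ) = J + i(μ̄ - λ) Π* (A* - μ̄ I)^{-1} S^{-1} (A - λ I)^{-1} Π. In particular w_A(λ̄)* J w_A(λ) = J. -/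
/-! Expanding `w_A(μ)* J w_A(λ)` with `J* = J = J⁻¹` and `(S⁻¹)* = S⁻¹` leaves `J`, two terms linear
in `Π`, and the cross term `Π* (A* - μ̄)⁻¹ S⁻¹ (Π J Π*) S⁻¹ (A - λ)⁻¹ Π`. The node identity turns
`S⁻¹ (Π J Π*) S⁻¹` into `-i (S⁻¹ A - A* S⁻¹)`, and the resolvent equations reduce
`(A* - μ̄)⁻¹ (S⁻¹ A - A* S⁻¹) (A - λ)⁻¹` to
`(A* - μ̄)⁻¹ S⁻¹ - S⁻¹ (A - λ)⁻¹ + (λ - μ̄) (A* - μ̄)⁻¹ S⁻¹ (A - λ)⁻¹`,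
whose first two terms cancel the linear ones. -/

open Matrix ContinuousLinearMap

noncomputable def JL (p : ℕ) :
    EuclideanSpace ℂ (Fin p ⊕ Fin p) →L[ℂ] EuclideanSpace ℂ (Fin p ⊕ Fin p) :=
  Matrix.toEuclideanCLM (𝕜 := ℂ) (Jm p)

theorem JL_adjoint (p : ℕ) : adjoint (JL p) = JL p := by
  rw [← star_eq_adjoint, JL, ← map_star]
  congr 1
  simp [Jm, star_eq_conjTranspose, Matrix.fromBlocks_conjTranspose]

theorem JL_mul_self (p : ℕ) : JL p * JL p = 1 := by
  rw [JL, ← _root_.map_mul]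
  rw [show Jm p * Jm p = 1 by simp [Jm, Matrix.fromBlocks_multiply, ← Matrix.fromBlocks_one]]
  simp

section StarRing

variable {𝒜 : Type*}

theorem star_eq_self_of_mul_eq_one [Monoid 𝒜] [StarMul 𝒜] {s t : 𝒜} (hs : star s = s)
    (h : s * t = 1) : star t = t :=
  left_inv_eq_right_inv (by simpa [hs] using congrArg star h) h

theorem mul_sub_mul_mul_of_mul_eq_one [Ring 𝒜] {s t b c : 𝒜} (hst : s * t = 1)
    (hts : t * s = 1) : t * (b * s - s * c) * t = t * b - c * t := by
  simp only [mul_sub, sub_mul, mul_assoc, hst, mul_one, ← mul_assoc t s, hts, one_mul]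

theorem star_mul_resolvent [Ring 𝒜] [StarRing 𝒜] [Algebra ℂ 𝒜] [StarModule ℂ 𝒜]
    {a t r₁ r₂ : 𝒜} {z w : ℂ} (h₁ : (a - z • 1) * r₁ = 1) (h₂ : (a - w • 1) * r₂ = 1) :
    star r₂ * (t * a - star a * t) * r₁ =
      star r₂ * t - t * r₁ + (z - starRingEnd ℂ w) • (star r₂ * t * r₁) := by
  have h₂' : star r₂ * (star a - starRingEnd ℂ w • 1) = 1 := by
    simpa [star_mul, star_sub, star_smul] using congrArg star h₂
  have e₁ : a * r₁ = 1 + z • r₁ := by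
    rwa [sub_mul, smul_one_mul, sub_eq_iff_eq_add] at h₁
  have e₂ : star r₂ * star a = 1 + starRingEnd ℂ w • star r₂ := by
    rwa [mul_sub, mul_smul_one, sub_eq_iff_eq_add] at h₂'
  calc star r₂ * (t * a - star a * t) * r₁
      = star r₂ * t * (a * r₁) - (star r₂ * star a) * t * r₁ := by noncomm_ring
    _ = _ := by
      rw [e₁, e₂]
      simp only [mul_add, add_mul, mul_one, one_mul, mul_smul_comm, smul_mul_assoc, sub_smul]
      abel

end StarRing

section TransferFunction

variable {E H : Type*} [NormedAddCommGroup E] [InnerProductSpace ℂ E] [CompleteSpace E]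
  [NormedAddCommGroup H] [InnerProductSpace ℂ H] [CompleteSpace H]

/-- `w_A(λ)` of the node, with `T = S⁻¹` and `R = (A - λ)⁻¹`. -/
noncomputable def transferFunction (J : E →L[ℂ] E) (P : E →L[ℂ] H) (T R : H →L[ℂ] H) :
    E →L[ℂ] E :=
  1 - Complex.I • J.comp ((adjoint P).comp (T.comp (R.comp P)))

theorem adjoint_transferFunction {J : E →L[ℂ] E} {T : H →L[ℂ] H} (hJ : adjoint J = J)
    (hT : adjoint T = T) (P : E →L[ℂ] H) (R : H →L[ℂ] H) :
    adjoint (transferFunction J P T R) =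
      1 + Complex.I • (adjoint P).comp ((adjoint R * T).comp (P.comp J)) := by
  simp only [transferFunction, ← star_eq_adjoint, star_sub, star_one, star_smul]
  simp only [star_eq_adjoint, adjoint_comp, adjoint_adjoint, hJ, hT, mul_def, comp_assoc]
  simp [sub_eq_add_neg]

theorem comp_transferFunction {J : E →L[ℂ] E} (hJJ : J * J = 1) (P : E →L[ℂ] H)
    (T R : H →L[ℂ] H) :
    J.comp (transferFunction J P T R) = J - Complex.I • (adjoint P).comp (T.comp (R.comp P)) := by
  rw [transferFunction, comp_sub, comp_smul, ← comp_assoc, ← mul_def J J, hJJ, one_def, comp_id,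
    id_comp]

theorem adjoint_transferFunction_comp_comp_transferFunction
    {A S T R₁ R₂ : H →L[ℂ] H} {J : E →L[ℂ] E} {P : E →L[ℂ] H} {z w : ℂ}
    (hJ : adjoint J = J) (hJJ : J * J = 1) (hS : adjoint S = S) (hST : S * T = 1)
    (hnode : A * S - S * adjoint A = Complex.I • P.comp (J.comp (adjoint P)))
    (h₁ : (A - z • 1) * R₁ = 1) (h₂ : (A - w • 1) * R₂ = 1) :
    (adjoint (transferFunction J P T R₂)).comp (J.comp (transferFunction J P T R₁)) =
      J + (Complex.I * (starRingEnd ℂ w - z)) •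
        (adjoint (R₂.comp P)).comp (T.comp (R₁.comp P)) := by
  have hT : adjoint T = T := star_eq_self_of_mul_eq_one hS hST
  have hTS : T * S = 1 := by
    have := congrArg star hST
    rwa [star_mul, star_one, star_eq_adjoint, star_eq_adjoint, hS, hT] at this
  have hPJP : P.comp (J.comp (adjoint P)) = (-Complex.I) • (A * S - S * adjoint A) := by
    rw [hnode, smul_smul, neg_mul, Complex.I_mul_I, neg_neg, one_smul]
  have hcross : adjoint R₂ * T * P.comp (J.comp (adjoint P)) * T * R₁ =
      (-Complex.I) • (adjoint R₂ * T - T * R₁ + (z - starRingEnd ℂ w) • (adjoint R₂ * T * R₁)) := by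
    calc adjoint R₂ * T * P.comp (J.comp (adjoint P)) * T * R₁
        = (-Complex.I) • (star R₂ * (T * (A * S - S * star A) * T) * R₁) := by
          rw [hPJP]; simp only [mul_smul_comm, smul_mul_assoc, mul_assoc]; rfl
      _ = _ := by rw [mul_sub_mul_mul_of_mul_eq_one hST hTS, star_mul_resolvent h₁ h₂]; rfl
  calc (adjoint (transferFunction J P T R₂)).comp (J.comp (transferFunction J P T R₁))
      = J - Complex.I • (adjoint P).comp ((T * R₁).comp P)
          + Complex.I • (adjoint P).comp ((adjoint R₂ * T).comp P)
          + (adjoint P).comp ((adjoint R₂ * T * P.comp (J.comp (adjoint P)) * T * R₁).comp P) := by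
        rw [comp_transferFunction hJJ, adjoint_transferFunction hJ hT]
        rw [mul_def] at hJJ
        simp only [comp_sub, add_comp, comp_smul, smul_comp, mul_def, comp_assoc, hJJ, one_def,
          id_comp, comp_id]
        match_scalars <;> simp
    _ = _ := by
        rw [hcross]
        simp only [comp_sub, sub_comp, comp_add, add_comp, comp_smul, smul_comp, mul_def,
          comp_assoc, adjoint_comp]
        module

end TransferFunction

theorem transfer_function_J_identity_general (p : ℕ)
    {H : Type*} [NormedAddCommGroup H] [InnerProductSpace ℂ H] [CompleteSpace H]
    (A S Sinv : H →L[ℂ] H)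
    (Pi' : EuclideanSpace ℂ (Fin p ⊕ Fin p) →L[ℂ] H)
    (hSsa : adjoint S = S)
    (hSinv1 : S.comp Sinv = 1)
    (hid : A.comp S - S.comp (adjoint A) =
      Complex.I • (Pi'.comp ((JL p).comp (adjoint Pi'))))
    (ρ : Set ℂ) (R : ℂ → (H →L[ℂ] H))
    (hR : ∀ z ∈ ρ, (A - z • (1 : H →L[ℂ] H)).comp (R z) = 1 ∧
      (R z).comp (A - z • (1 : H →L[ℂ] H)) = 1)
    (wA : ℂ → (EuclideanSpace ℂ (Fin p ⊕ Fin p) →L[ℂ] EuclideanSpace ℂ (Fin p ⊕ Fin p)))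
    (hwA : ∀ z ∈ ρ, wA z = 1 -
      Complex.I • ((JL p).comp ((adjoint Pi').comp (Sinv.comp ((R z).comp Pi'))))) :
    (∀ lam ∈ ρ, ∀ mu ∈ ρ,
      (adjoint (wA mu)).comp ((JL p).comp (wA lam)) = JL p +
        (Complex.I * (starRingEnd ℂ mu - lam)) •
          ((adjoint ((R mu).comp Pi')).comp (Sinv.comp ((R lam).comp Pi')))) ∧
    (∀ lam ∈ ρ, starRingEnd ℂ lam ∈ ρ →
      (adjoint (wA (starRingEnd ℂ lam))).comp ((JL p).comp (wA lam)) = JL p) := by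
  have key : ∀ lam ∈ ρ, ∀ mu ∈ ρ,
      (adjoint (wA mu)).comp ((JL p).comp (wA lam)) = JL p +
        (Complex.I * (starRingEnd ℂ mu - lam)) •
          ((adjoint ((R mu).comp Pi')).comp (Sinv.comp ((R lam).comp Pi'))) := by
    intro lam hlam mu hmu
    rw [hwA lam hlam, hwA mu hmu]
    exact adjoint_transferFunction_comp_comp_transferFunction (JL_adjoint p) (JL_mul_self p)
      hSsa hSinv1 hid (hR lam hlam).1 (hR mu hmu).1
  refine ⟨key, fun lam hlam hlamc => ?_⟩
  rw [key lam hlam _ hlamc, Complex.conj_conj, sub_self, mul_zero, zero_smul, add_zero]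

/-- for a symmetric S-node `{A,S,Π}` (`AS - SA* = iΠJΠ*`,
`S = S* > 0` boundedly invertible) with resolvents `R z = (A - z)⁻¹` and
`w_A(λ) = I - iJΠ*S⁻¹(A-λ)⁻¹Π`, one has
`w_A(μ)* J w_A(λ) = J + i(μ̄-λ) Π*(A*-μ̄)⁻¹ S⁻¹ (A-λ)⁻¹ Π`; in particular
`w_A(λ̄)* J w_A(λ) = J`. -/
theorem transfer_function_J_identity (p : ℕ)
    {H : Type*} [NormedAddCommGroup H] [InnerProductSpace ℂ H] [CompleteSpace H]
    (A S Sinv : H →L[ℂ] H)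
    (Pi' : EuclideanSpace ℂ (Fin p ⊕ Fin p) →L[ℂ] H)
    (hSsa : adjoint S = S)
    (hSpos : ∃ ε : ℝ, 0 < ε ∧ ∀ f : H, ε * ‖f‖ ^ 2 ≤ (inner ℂ (S f) f : ℂ).re)
    (hSinv1 : S.comp Sinv = 1) (hSinv2 : Sinv.comp S = 1)
    (hid : A.comp S - S.comp (adjoint A) =
      Complex.I • (Pi'.comp ((JL p).comp (adjoint Pi'))))
    (ρ : Set ℂ) (R : ℂ → (H →L[ℂ] H))
    (hR : ∀ z ∈ ρ, (A - z • (1 : H →L[ℂ] H)).comp (R z) = 1 ∧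
      (R z).comp (A - z • (1 : H →L[ℂ] H)) = 1)
    (wA : ℂ → (EuclideanSpace ℂ (Fin p ⊕ Fin p) →L[ℂ] EuclideanSpace ℂ (Fin p ⊕ Fin p)))
    (hwA : ∀ z ∈ ρ, wA z = 1 -
      Complex.I • ((JL p).comp ((adjoint Pi').comp (Sinv.comp ((R z).comp Pi'))))) :
    (∀ lam ∈ ρ, ∀ mu ∈ ρ,
      (adjoint (wA mu)).comp ((JL p).comp (wA lam)) = JL p +
        (Complex.I * (starRingEnd ℂ mu - lam)) •
          ((adjoint ((R mu).comp Pi')).comp (Sinv.comp ((R lam).comp Pi')))) ∧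
    (∀ lam ∈ ρ, starRingEnd ℂ lam ∈ ρ →
      (adjoint (wA (starRingEnd ℂ lam))).comp ((JL p).comp (wA lam)) = JL p) :=
  transfer_function_J_identity_general p A S Sinv Pi' hSsa hSinv1 hid ρ R hR wA hwA
end

section
/- Let S be a strictly positive bounded operator on a Hilbert space H, Φ₂ : ℂ^p → H bounded and injective. If Φ₂* S^{-1} Φ₂ > 0 and the function z ↦ Π* S^{-1} (A - zI)^{-1} Φ₂ g vanishes identically for z outside the spectrum of A (where A is bounded with spectrum {0} and Π = [Φ₁ Φ₂]), then g = 0. (Proof via the Neumann series expansion at z → ∞: the leading coefficient gives Φ₂* S^{-1} Φ₂ g = 0.) -/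
/-!
Since `(A - z)R(z) = 1`, any operator `T` killing `R(z)x` satisfies `T x = T A R(z) x`, and
`‖R(z)x‖ ≤ ‖x‖ / (|z| - ‖A‖) → 0` as `|z| → ∞`; hence `T x = 0`. Because the range of `Φ₂` lies
in the range of `Π`, the vanishing of `Π* S⁻¹ R(z) Φ₂ g` gives that of `Φ₂* S⁻¹ R(z) Φ₂ g`, so
`Φ₂* S⁻¹ Φ₂ g = 0`, and positivity of `Φ₂* S⁻¹ Φ₂` forces `g = 0`.
-/

open ContinuousLinearMap Filter Topology Bornology

section Resolvent

variable {𝕜 E F : Type*} [NontriviallyNormedField 𝕜] [NormedAddCommGroup E] [NormedSpace 𝕜 E]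
  [NormedAddCommGroup F] [NormedSpace 𝕜 F]

lemma norm_sub_norm_mul_le_of_sub_smul_comp_eq_one {A B : E →L[𝕜] E} {z : 𝕜}
    (h : (A - z • 1).comp B = 1) (x : E) : (‖z‖ - ‖A‖) * ‖B x‖ ≤ ‖x‖ := by
  have hx : z • B x = A (B x) - x := by
    have := congrArg (· x) h
    simp only [comp_apply, sub_apply, smul_apply, one_apply_eq_self] at this
    exact eq_sub_of_add_eq (sub_eq_iff_eq_add'.mp this).symm
  have : ‖z‖ * ‖B x‖ ≤ ‖A‖ * ‖B x‖ + ‖x‖ := calc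
    ‖z‖ * ‖B x‖ = ‖A (B x) - x‖ := by rw [← hx, norm_smul]
    _ ≤ ‖A (B x)‖ + ‖x‖ := norm_sub_le _ _
    _ ≤ ‖A‖ * ‖B x‖ + ‖x‖ := by gcongr; exact A.le_opNorm _
  linarith

lemma tendsto_apply_cobounded_of_sub_smul_comp_eq_one {A : E →L[𝕜] E} {R : 𝕜 → E →L[𝕜] E}
    (hR : ∀ᶠ z in cobounded 𝕜, (A - z • 1).comp (R z) = 1) (x : E) :
    Tendsto (fun z ↦ R z x) (cobounded 𝕜) (𝓝 0) := by
  have hlim : Tendsto (fun z : 𝕜 ↦ ‖x‖ / (‖z‖ - ‖A‖)) (cobounded 𝕜) (𝓝 0) :=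
    tendsto_const_nhds.div_atTop (tendsto_atTop_add_const_right _ _ tendsto_norm_cobounded_atTop)
  refine squeeze_zero_norm' ?_ hlim
  filter_upwards [hR, tendsto_norm_cobounded_atTop.eventually_gt_atTop ‖A‖] with z hz hzA
  rw [le_div_iff₀ (sub_pos.2 hzA), mul_comm]
  exact norm_sub_norm_mul_le_of_sub_smul_comp_eq_one hz x

lemma eq_zero_of_apply_sub_smul_comp_eq_one {A : E →L[𝕜] E} {R : 𝕜 → E →L[𝕜] E} {T : E →L[𝕜] F}
    {x : E} (hR : ∀ᶠ z in cobounded 𝕜, (A - z • 1).comp (R z) = 1)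
    (hT : ∀ᶠ z in cobounded 𝕜, T (R z x) = 0) : T x = 0 := by
  have hTx : ∀ᶠ z in cobounded 𝕜, T x = (T.comp A) (R z x) := by
    filter_upwards [hR, hT] with z hz hTz
    have := congrArg (fun S ↦ T (S x)) hz
    simpa [hTz] using this.symm
  have hlim := ((T.comp A).continuous.tendsto 0).comp
    (tendsto_apply_cobounded_of_sub_smul_comp_eq_one hR x)
  rw [map_zero] at hlim
  exact tendsto_nhds_unique (tendsto_const_nhds.congr' hTx) hlim

end Resolvent

lemma ContinuousLinearMap.adjoint_apply_eq_zero_of_range_le {𝕜 E F G : Type*} [RCLike 𝕜]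
    [NormedAddCommGroup E] [InnerProductSpace 𝕜 E] [CompleteSpace E]
    [NormedAddCommGroup F] [InnerProductSpace 𝕜 F] [CompleteSpace F]
    [NormedAddCommGroup G] [InnerProductSpace 𝕜 G] [CompleteSpace G]
    {T : E →L[𝕜] F} {U : G →L[𝕜] F} (hTU : U.range ≤ T.range) {w : F} (hw : adjoint T w = 0) :
    adjoint U w = 0 := by
  have : w ∈ (adjoint T).ker := hw
  rw [← orthogonal_range] at this
  exact (orthogonal_range U ▸ Submodule.orthogonal_le hTU this : w ∈ (adjoint U).ker)

theorem vanishing_resolvent_implies_zero_general (p : ℕ)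
    {H : Type*} [NormedAddCommGroup H] [InnerProductSpace ℂ H] [CompleteSpace H]
    (A Sinv : H →L[ℂ] H)
    (Φ₁ Φ₂ : EuclideanSpace ℂ (Fin p) →L[ℂ] H)
    (Pi' : EuclideanSpace ℂ (Fin p ⊕ Fin p) →L[ℂ] H)
    (hPiBlocks : ∀ h : EuclideanSpace ℂ (Fin p ⊕ Fin p),
      Pi' h = Φ₁ (WithLp.toLp 2 (fun i => h (Sum.inl i))) + Φ₂ (WithLp.toLp 2 (fun i => h (Sum.inr i))))
    (hposdef : ∀ g : EuclideanSpace ℂ (Fin p), g ≠ 0 →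
      0 < (inner ℂ ((adjoint Φ₂) (Sinv (Φ₂ g))) g : ℂ).re)
    (R : ℂ → (H →L[ℂ] H))
    (hR : ∀ z : ℂ, z ≠ 0 → (A - z • (1 : H →L[ℂ] H)).comp (R z) = 1 ∧
      (R z).comp (A - z • (1 : H →L[ℂ] H)) = 1)
    (g : EuclideanSpace ℂ (Fin p))
    (hvan : ∀ z : ℂ, z ≠ 0 → (adjoint Pi') (Sinv (R z (Φ₂ g))) = 0) :
    g = 0 := by
  have hrange : Φ₂.range ≤ Pi'.range := by
    rintro _ ⟨v, rfl⟩
    exact ⟨WithLp.toLp 2 (Sum.elim 0 v), by simp [hPiBlocks]; exact map_zero Φ₁⟩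
  have hres : ∀ᶠ z in cobounded ℂ, (A - z • 1).comp (R z) = 1 :=
    (eventually_ne_cobounded 0).mono fun z hz ↦ (hR z hz).1
  have hvan₂ : ∀ᶠ z in cobounded ℂ, ((adjoint Φ₂).comp Sinv) (R z (Φ₂ g)) = 0 :=
    (eventually_ne_cobounded 0).mono fun z hz ↦ adjoint_apply_eq_zero_of_range_le hrange (hvan z hz)
  have hgram : (adjoint Φ₂) (Sinv (Φ₂ g)) = 0 :=
    eq_zero_of_apply_sub_smul_comp_eq_one (T := (adjoint Φ₂).comp Sinv) hres hvan₂
  by_contra hg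
  simpa [hgram] using hposdef g hg

/-- let `S > 0` be bounded, `Φ₂` injective, `A` bounded with
spectrum `{0}`, `Π = [Φ₁ Φ₂]`.  If `Φ₂* S⁻¹ Φ₂ > 0` and
`Π* S⁻¹ (A - zI)⁻¹ Φ₂ g = 0` for all `z ≠ 0`, then `g = 0`. -/
theorem vanishing_resolvent_implies_zero (p : ℕ)
    {H : Type*} [NormedAddCommGroup H] [InnerProductSpace ℂ H] [CompleteSpace H]
    (A S Sinv : H →L[ℂ] H)
    (hspec : spectrum ℂ A = {0})
    (hSsa : adjoint S = S)
    (hSpos : ∃ ε : ℝ, 0 < ε ∧ ∀ f : H, ε * ‖f‖ ^ 2 ≤ (inner ℂ (S f) f : ℂ).re)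
    (hSinv1 : S.comp Sinv = 1) (hSinv2 : Sinv.comp S = 1)
    (Φ₁ Φ₂ : EuclideanSpace ℂ (Fin p) →L[ℂ] H)
    (hΦ₂inj : Function.Injective Φ₂)
    (Pi' : EuclideanSpace ℂ (Fin p ⊕ Fin p) →L[ℂ] H)
    (hPiBlocks : ∀ h : EuclideanSpace ℂ (Fin p ⊕ Fin p),
      Pi' h = Φ₁ (WithLp.toLp 2 (fun i => h (Sum.inl i))) + Φ₂ (WithLp.toLp 2 (fun i => h (Sum.inr i))))
    (hposdef : ∀ g : EuclideanSpace ℂ (Fin p), g ≠ 0 →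
      0 < (inner ℂ ((adjoint Φ₂) (Sinv (Φ₂ g))) g : ℂ).re)
    (R : ℂ → (H →L[ℂ] H))
    (hR : ∀ z : ℂ, z ≠ 0 → (A - z • (1 : H →L[ℂ] H)).comp (R z) = 1 ∧
      (R z).comp (A - z • (1 : H →L[ℂ] H)) = 1)
    (g : EuclideanSpace ℂ (Fin p))
    (hvan : ∀ z : ℂ, z ≠ 0 → (adjoint Pi') (Sinv (R z (Φ₂ g))) = 0) :
    g = 0 :=
  vanishing_resolvent_implies_zero_general p A Sinv Φ₁ Φ₂ Pi' hPiBlocks hposdef R hR g hvan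
end
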